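/- For n ≥ 2^M, for x ∈ I_{l+1}(e_k + e_l) with 0 ≤ k < l < M, the Walsh–Fejér kernel satisfies ∫_{I_M} |K_n(x+t)| dμ(t) ≤ c 2^{k+l−2M} for an absolute constant c. -/

import Mathlib

open MeasureTheory Filter Topology ENNReal NNReal

noncomputable section

/-- The dyadic group `G = (ℤ/2)^ℕ`. -/
abbrev G : Type := ℕ → ZMod 2

instance : TopologicalSpace (ZMod 2) := ⊥
instance : DiscreteTopology (ZMod 2) := ⟨rfl⟩
instance : MeasurableSpace G := borel G
instance : BorelSpace G := ⟨rfl⟩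

/-- Normalized Haar measure on `G`. -/
def μG : Measure G := Measure.addHaarMeasure ⟨⟨Set.univ, isCompact_univ⟩, by simp⟩

/-- Cylinder `I_n(x) = {y : y_0 = x_0, ..., y_{n-1} = x_{n-1}}`. -/
def cyl (n : ℕ) (x : G) : Set G := {y | ∀ k < n, y k = x k}

/-- `I_n = I_n(0)`. -/
def I₀ (n : ℕ) : Set G := cyl n 0

/-- `e t`: the element of `G` with a single 1 in coordinate `t`. -/
def e (t : ℕ) : G := fun k => if k = t then 1 else 0

/-- Rademacher functions `r_k(x) = (-1)^{x_k}`. -/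
def rade (k : ℕ) (x : G) : ℝ := (-1 : ℝ) ^ (x k).val

/-- Walsh functions `w_n = ∏ r_k^{n_k}` (binary digits `n_k` of `n`). -/
def walsh (n : ℕ) (x : G) : ℝ :=
  ∏ k ∈ Finset.range (n + 1), if n.testBit k then rade k x else 1

/-- Walsh–Dirichlet kernel `D_n = ∑_{k<n} w_k`. -/
def D (n : ℕ) (x : G) : ℝ := ∑ k ∈ Finset.range n, walsh k x

/-- Walsh–Fejér kernel `K_n = (1/n) ∑_{k=1}^n D_k`. -/
def K (n : ℕ) (x : G) : ℝ := (1 / n) * ∑ k ∈ Finset.Icc 1 n, D k x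

/-- Binary variation `V(n) = n_0 + ∑_{k≥1} |n_k - n_{k-1}|`. -/
def V (n : ℕ) : ℕ :=
  (if n.testBit 0 then 1 else 0) +
    ∑ k ∈ Finset.Icc 1 (n + 1), if n.testBit k ≠ n.testBit (k - 1) then 1 else 0

/-- `|n|`: index of the highest nonzero binary digit of `n`. -/
def hi (n : ℕ) : ℕ := Nat.log 2 n

/-- `[n]`: index of the lowest nonzero binary digit of `n`. -/
def lo (n : ℕ) : ℕ := padicValNat 2 n

/-- `d(n) = |n| - [n]`. -/
def dd (n : ℕ) : ℕ := hi n - lo n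

/-- A dyadic martingale: `F n` depends only on the first `n` coordinates, and
`F n` is the average of the two possible extensions, i.e. the martingale property
with respect to the dyadic filtration. -/
def IsDyadicMartingale (F : ℕ → G → ℝ) : Prop :=
  (∀ n x y, (∀ k < n, x k = y k) → F n x = F n y) ∧
  (∀ n x, F n x = (F (n+1) x + F (n+1) (Function.update x n (x n + 1))) / 2)

/-- `k`-th Walsh–Fourier coefficient of a martingale,
`F̂(k) = lim_n ∫ F_n w_k dμ` (the integrals are eventually constant). -/
def mcoeff (F : ℕ → G → ℝ) (k : ℕ) : ℝ := ∫ x, F (k+1) x * walsh k x ∂μG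

/-- Partial sums `S_m F` of the Walsh–Fourier series of a martingale. -/
def S (F : ℕ → G → ℝ) (m : ℕ) (x : G) : ℝ := ∑ j ∈ Finset.range m, mcoeff F j * walsh j x

/-- Fejér means `σ_n F = (1/n) ∑_{k=1}^n S_k F`. -/
def σ (F : ℕ → G → ℝ) (n : ℕ) (x : G) : ℝ := (1 / n) * ∑ k ∈ Finset.Icc 1 n, S F k x

/-- `H_p` quasi-norm of a martingale: `‖sup_n |F_n|‖_{L_p}`. -/
def HpNorm (p : ℝ) (F : ℕ → G → ℝ) : ℝ≥0∞ :=
  (∫⁻ x, (⨆ n, (‖F n x‖₊ : ℝ≥0∞)) ^ p ∂μG) ^ (1 / p)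

/-- Membership in the martingale Hardy space `H_p(G)`. -/
def MemHp (p : ℝ) (F : ℕ → G → ℝ) : Prop := IsDyadicMartingale F ∧ HpNorm p F < ⊤

/-- `L_p` quasi-norm of a function on `G`. -/
def LpN (p : ℝ) (f : G → ℝ) : ℝ≥0∞ := (∫⁻ x, (‖f x‖₊ : ℝ≥0∞) ^ p ∂μG) ^ (1 / p)

/-- Weak `L_p` quasi-norm: `‖f‖_{L_{p,∞}} = sup_{λ>0} λ μ(|f|>λ)^{1/p}`. -/
def wLp (p : ℝ) (f : G → ℝ) : ℝ≥0∞ :=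
  ⨆ t : ℝ≥0, (t : ℝ≥0∞) * (μG {x | (t : ℝ) < |f x|}) ^ (1 / p)

/-- Walsh–Fourier coefficient of an integrable function. -/
def fcoeff (f : G → ℝ) (j : ℕ) : ℝ := ∫ x, f x * walsh j x ∂μG

/-- Partial sums of the Walsh–Fourier series of a function. -/
def Sf (f : G → ℝ) (m : ℕ) (x : G) : ℝ := ∑ j ∈ Finset.range m, fcoeff f j * walsh j x

/-- Fejér means of the Walsh–Fourier series of a function. -/
def σf (f : G → ℝ) (n : ℕ) (x : G) : ℝ := (1 / n) * ∑ k ∈ Finset.Icc 1 n, Sf f k x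

/-- The martingale `(S_{2^m} g)_m` generated by a function `g`; used to interpret the
`H_p` norm of a function such as `σ_n F`. -/
def funMart (g : G → ℝ) : ℕ → G → ℝ := fun m => Sf g (2 ^ m)

/-- Modulus of continuity in `H_p`: `ω_{H_p}(1/2^n, F) = ‖F - S_{2^n} F‖_{H_p}`,
where `F - S_{2^n}F` is the martingale with `m`-th term `F_m - S_{min(2^n, 2^m)}F`. -/
def ωHp (p : ℝ) (n : ℕ) (F : ℕ → G → ℝ) : ℝ≥0∞ :=
  HpNorm p (fun m x => F m x - S F (min (2 ^ n) (2 ^ m)) x)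

/-- The a.e. limit of a martingale (as a limsup, which agrees a.e. with the limit
for martingales in `H_p`). -/
def mLim (F : ℕ → G → ℝ) (x : G) : ℝ := Filter.limsup (fun m => F m x) Filter.atTop

/-- The set `E_l := I_{l+1}(e_{l-1} + e_l)`, with the convention
`I_1(e_{-1}+e_0) = I_2(e_0+e_1)` for `l = 0`. -/
def Eset (l : ℕ) : Set G :=
  if l = 0 then cyl 2 (e 0 + e 1) else cyl (l + 1) (e (l - 1) + e l)

/-! On `x + I_M` every point `y` has `y_k = y_l = 1`. Paley's lemma `D_{2^i} = 2^i 𝟙_{I_i}` and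
the splitting `n = 2^A + m` give `|n K_n(y)| ≤ ∑_i (2^i K_{2^i}(y) + 2^i D_{2^i}(y))`; the `i`-th
term vanishes for `i > l` and is at most `2^{i+k+1}` otherwise, so `|K_n| ≤ 2^{k+l+2} / 2^M` on
`x + I_M`, a set of measure `2^{-M}`. -/

lemma ZMod.two_cases (a : ZMod 2) : a = 0 ∨ a = 1 := by revert a; decide

lemma abs_rade (k : ℕ) (y : G) : |rade k y| = 1 := by simp [rade]

lemma one_add_rade (k : ℕ) (y : G) : 1 + rade k y = if y k = 0 then 2 else 0 := by
  rcases ZMod.two_cases (y k) with h | h <;> simp only [rade, h]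
  · norm_num
  · norm_num [show (1 : ZMod 2).val = 1 from rfl]

lemma mem_I₀_succ {i : ℕ} {y : G} : y ∈ I₀ (i + 1) ↔ y ∈ I₀ i ∧ y i = 0 := by
  simp only [I₀, cyl, Set.mem_ofPred_eq, Pi.zero_apply]
  refine ⟨fun h => ⟨fun j hj => h j (by omega), h i (by omega)⟩, fun ⟨h, hi⟩ j hj => ?_⟩
  rcases Nat.lt_succ_iff_lt_or_eq.1 hj with hj | rfl
  exacts [h j hj, hi]

lemma walsh_eq_prod_range {n B : ℕ} (hB : n < 2 ^ B) (y : G) :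
    walsh n y = ∏ i ∈ Finset.range B, if n.testBit i then rade i y else 1 := by
  have hvanish : ∀ i, n < 2 ^ i → (if n.testBit i then rade i y else 1) = 1 := fun i hi => by
    simp [Nat.testBit_lt_two_pow hi]
  rcases le_total (n + 1) B with h | h
  · exact Finset.prod_subset (Finset.range_subset_range.2 h) fun i _ hi =>
      hvanish i ((Nat.lt_pow_self one_lt_two).trans_le
        (Nat.pow_le_pow_right two_pos (by simp at hi; omega)))
  · exact (Finset.prod_subset (Finset.range_subset_range.2 h) fun i _ hi =>
      hvanish i (hB.trans_le (Nat.pow_le_pow_right two_pos (by simpa using hi)))).symm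

lemma walsh_two_pow_add {A j : ℕ} (hj : j < 2 ^ A) (y : G) :
    walsh (2 ^ A + j) y = rade A y * walsh j y := by
  have hlt : 2 ^ A + j < 2 ^ (A + 1) := by rw [pow_succ]; omega
  rw [walsh_eq_prod_range hlt, walsh_eq_prod_range hj, Finset.prod_range_succ, mul_comm,
    Nat.testBit_two_pow_add_eq, Nat.testBit_lt_two_pow hj]
  refine congrArg _ (Finset.prod_congr rfl fun i hi => ?_)
  rw [Nat.testBit_two_pow_add_gt (Finset.mem_range.1 hi)]

lemma D_two_pow_add {A j : ℕ} (hj : j ≤ 2 ^ A) (y : G) :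
    D (2 ^ A + j) y = D (2 ^ A) y + rade A y * D j y := by
  simp only [D, Finset.sum_range_add, Finset.mul_sum]
  exact congrArg _ (Finset.sum_congr rfl fun i hi =>
    walsh_two_pow_add ((Finset.mem_range.1 hi).trans_le hj) y)

/-- Paley's lemma. -/
lemma D_two_pow (i : ℕ) : D (2 ^ i) = (I₀ i).indicator fun _ => 2 ^ i := by
  induction i with
  | zero => ext y; simp [D, walsh, I₀, cyl]
  | succ i ih =>
    ext y
    rw [pow_succ, mul_two, D_two_pow_add le_rfl, ← one_add_mul, ih, one_add_rade]
    by_cases h₁ : y ∈ I₀ i <;> by_cases h₂ : y i = 0 <;>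
      simp [h₁, h₂, mem_I₀_succ, pow_succ, mul_comm]

lemma D_two_pow_nonneg (i : ℕ) (y : G) : 0 ≤ D (2 ^ i) y := by
  rw [D_two_pow]; exact Set.indicator_nonneg (fun _ _ => by positivity) y

lemma D_two_pow_le (i : ℕ) (y : G) : D (2 ^ i) y ≤ 2 ^ i := by
  rw [D_two_pow]; exact Set.indicator_le_self' (fun _ _ => by positivity) y

lemma D_two_pow_eq_zero {k i : ℕ} {y : G} (hki : k < i) (hk : y k = 1) : D (2 ^ i) y = 0 := by
  have hy : y ∉ I₀ i := fun hy => one_ne_zero (hk.symm.trans (hy k hki))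
  rw [D_two_pow, Set.indicator_of_notMem hy]

def dirichletSum (n : ℕ) (y : G) : ℝ := ∑ j ∈ Finset.Icc 1 n, D j y

lemma K_eq_dirichletSum (n : ℕ) (y : G) : K n y = dirichletSum n y / n := by
  rw [K, dirichletSum, one_div_mul_eq_div]

lemma dirichletSum_two_pow_add {A m : ℕ} (hm : m ≤ 2 ^ A) (y : G) :
    dirichletSum (2 ^ A + m) y =
      dirichletSum (2 ^ A) y + m * D (2 ^ A) y + rade A y * dirichletSum m y := by
  have hIoc (n : ℕ) : Finset.Icc 1 n = Finset.Ioc 0 n := rfl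
  simp only [dirichletSum, hIoc]
  have hshift :
      Finset.Ioc (2 ^ A) (2 ^ A + m) = (Finset.Ioc 0 m).map (addLeftEmbedding (2 ^ A)) := by
    rw [Finset.map_add_left_Ioc, add_zero]
  rw [← Finset.sum_Ioc_consecutive _ (Nat.zero_le _) (Nat.le_add_right _ m), hshift,
    Finset.sum_map]
  simp only [addLeftEmbedding_apply]
  rw [Finset.sum_congr rfl fun j hj => D_two_pow_add ((Finset.mem_Ioc.1 hj).2.trans hm) y,
    Finset.sum_add_distrib, Finset.sum_const, Nat.card_Ioc, Nat.sub_zero, nsmul_eq_mul,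
    ← Finset.mul_sum, add_assoc]

lemma dirichletSum_two_pow_succ (i : ℕ) (y : G) :
    dirichletSum (2 ^ (i + 1)) y =
      (1 + rade i y) * dirichletSum (2 ^ i) y + 2 ^ i * D (2 ^ i) y := by
  rw [pow_succ, mul_two, dirichletSum_two_pow_add le_rfl]
  push_cast
  ring

lemma dirichletSum_two_pow_nonneg_and_le (i : ℕ) (y : G) :
    0 ≤ dirichletSum (2 ^ i) y ∧ dirichletSum (2 ^ i) y ≤ 4 ^ i := by
  induction i with
  | zero => norm_num [dirichletSum, D, walsh]
  | succ i ih =>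
    have hr : 0 ≤ 1 + rade i y ∧ 1 + rade i y ≤ 2 := by rw [one_add_rade]; split <;> norm_num
    have hD := mul_le_mul_of_nonneg_left (D_two_pow_le i y) (pow_nonneg zero_le_two i)
    have h4 : (2 : ℝ) ^ i * 2 ^ i = 4 ^ i := by rw [← mul_pow]; norm_num
    rw [dirichletSum_two_pow_succ, pow_succ]
    constructor
    · exact add_nonneg (mul_nonneg hr.1 ih.1)
        (mul_nonneg (pow_nonneg zero_le_two i) (D_two_pow_nonneg i y))
    · nlinarith [mul_le_mul hr.2 ih.2 ih.1 zero_le_two]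

lemma dirichletSum_two_pow_le_of_apply_eq_one {k i : ℕ} {y : G} (hk : y k = 1) (hki : k < i) :
    dirichletSum (2 ^ i) y ≤ 2 ^ (i + k) := by
  induction i, hki using Nat.le_induction with
  | base =>
    rw [dirichletSum_two_pow_succ, one_add_rade, if_neg (by simp [hk]), zero_mul, zero_add]
    calc (2 : ℝ) ^ k * D (2 ^ k) y ≤ 2 ^ k * 2 ^ k :=
          mul_le_mul_of_nonneg_left (D_two_pow_le k y) (by positivity)
      _ = 2 ^ (k + k) := (pow_add _ _ _).symm
      _ ≤ 2 ^ (k + 1 + k) := pow_le_pow_right₀ one_le_two (by omega)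
  | succ i hki ih =>
    have hr : 1 + rade i y ≤ 2 := by rw [one_add_rade]; split <;> norm_num
    rw [dirichletSum_two_pow_succ, D_two_pow_eq_zero hki hk, mul_zero, add_zero,
      add_right_comm, pow_succ]
    nlinarith [(dirichletSum_two_pow_nonneg_and_le i y).1]

lemma dirichletSum_two_pow_eq_zero {k l i : ℕ} {y : G} (hkl : k < l) (hk : y k = 1)
    (hl : y l = 1) (hli : l < i) : dirichletSum (2 ^ i) y = 0 := by
  induction i, hli using Nat.le_induction with
  | base =>
    rw [dirichletSum_two_pow_succ, one_add_rade, if_neg (by simp [hl]),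
      D_two_pow_eq_zero hkl hk]
    ring
  | succ i hli ih =>
    rw [dirichletSum_two_pow_succ, ih, D_two_pow_eq_zero (hkl.trans hli) hk]
    ring

lemma abs_dirichletSum_le_sum {B n : ℕ} (hn : n < 2 ^ B) (y : G) :
    |dirichletSum n y| ≤
      ∑ i ∈ Finset.range B, (dirichletSum (2 ^ i) y + 2 ^ i * D (2 ^ i) y) := by
  induction B generalizing n with
  | zero => simp [show n = 0 by simpa using hn, dirichletSum]
  | succ B ih =>
    rw [Finset.sum_range_succ]
    have hS := (dirichletSum_two_pow_nonneg_and_le B y).1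
    have hD := D_two_pow_nonneg B y
    rcases lt_or_ge n (2 ^ B) with h | h
    · have := mul_nonneg (pow_nonneg zero_le_two B) hD
      linarith [ih h]
    · obtain ⟨m, rfl⟩ := Nat.exists_eq_add_of_le h
      have hm : m < 2 ^ B := by rw [pow_succ] at hn; omega
      have hmB : (m : ℝ) ≤ 2 ^ B := by exact_mod_cast hm.le
      rw [dirichletSum_two_pow_add hm.le]
      calc |dirichletSum (2 ^ B) y + m * D (2 ^ B) y + rade B y * dirichletSum m y|
          ≤ dirichletSum (2 ^ B) y + m * D (2 ^ B) y + |dirichletSum m y| := by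
            rw [← one_mul |dirichletSum m y|, ← abs_rade B y, ← abs_mul]
            exact (abs_add_le _ _).trans_eq
              (congrArg (· + _) (abs_of_nonneg (by positivity)))
        _ ≤ _ := by nlinarith [ih hm]

lemma abs_dirichletSum_le {k l : ℕ} {y : G} (hkl : k < l) (hk : y k = 1) (hl : y l = 1)
    (n : ℕ) : |dirichletSum n y| ≤ 2 ^ (k + l + 2) := by
  have hn : n < 2 ^ (n + (l + 1)) :=
    (Nat.lt_pow_self one_lt_two).trans_le (Nat.pow_le_pow_right two_pos (by omega))
  have hblock : ∀ i ≤ l, dirichletSum (2 ^ i) y + 2 ^ i * D (2 ^ i) y ≤ 2 ^ i * 2 ^ (k + 1) := by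
    intro i hil
    rcases le_or_gt i k with hik | hki
    · have hS := (dirichletSum_two_pow_nonneg_and_le i y).2
      have hD := mul_le_mul_of_nonneg_left (D_two_pow_le i y) (pow_nonneg zero_le_two i)
      have h4 : (4 : ℝ) ^ i = 2 ^ i * 2 ^ i := by rw [← mul_pow]; norm_num
      have hik' : (2 : ℝ) ^ i ≤ 2 ^ k := pow_le_pow_right₀ one_le_two hik
      rw [pow_succ]
      nlinarith [pow_pos (zero_lt_two (α := ℝ)) i]
    · rw [D_two_pow_eq_zero hki hk, mul_zero, add_zero, ← pow_add]
      exact (dirichletSum_two_pow_le_of_apply_eq_one hk hki).trans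
        (pow_le_pow_right₀ one_le_two (by omega))
  calc |dirichletSum n y|
      ≤ ∑ i ∈ Finset.range (n + (l + 1)), (dirichletSum (2 ^ i) y + 2 ^ i * D (2 ^ i) y) :=
        abs_dirichletSum_le_sum hn y
    _ = ∑ i ∈ Finset.range (l + 1), (dirichletSum (2 ^ i) y + 2 ^ i * D (2 ^ i) y) := by
        refine (Finset.sum_subset (Finset.range_subset_range.2 (by omega)) fun i _ hi => ?_).symm
        have hli : l < i := by simpa using hi
        rw [dirichletSum_two_pow_eq_zero hkl hk hl hli, D_two_pow_eq_zero (hkl.trans hli) hk]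
        ring
    _ ≤ ∑ i ∈ Finset.range (l + 1), 2 ^ i * 2 ^ (k + 1) :=
        Finset.sum_le_sum fun i hi => hblock i (by simpa [Nat.lt_succ_iff] using hi)
    _ = (2 ^ (l + 1) - 1) * 2 ^ (k + 1) := by
        rw [← Finset.sum_mul, geom_sum_eq (by norm_num : (2 : ℝ) ≠ 1)]
        norm_num
    _ ≤ 2 ^ (l + 1) * 2 ^ (k + 1) :=
        mul_le_mul_of_nonneg_right (sub_le_self _ zero_le_one) (by positivity)
    _ = 2 ^ (k + l + 2) := by rw [← pow_add]; ring_nf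

lemma abs_K_le {k l M n : ℕ} {y : G} (hkl : k < l) (hk : y k = 1) (hl : y l = 1)
    (hn : 2 ^ M ≤ n) : |K n y| ≤ 2 ^ (k + l + 2) / 2 ^ M := by
  have hM : (0 : ℝ) < 2 ^ M := by positivity
  have hnM : (2 : ℝ) ^ M ≤ n := by exact_mod_cast hn
  rw [K_eq_dirichletSum, abs_div, Nat.abs_cast]
  exact div_le_div₀ (by positivity) (abs_dirichletSum_le hkl hk hl n) hM hnM

lemma apply_eq_one_of_mem_cyl_e_add_e {k l : ℕ} {y : G} (hkl : k < l)
    (hy : y ∈ cyl (l + 1) (e k + e l)) : y k = 1 ∧ y l = 1 := by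
  refine ⟨(hy k (by omega)).trans ?_, (hy l (by omega)).trans ?_⟩ <;>
    simp [e, hkl.ne, hkl.ne']

lemma add_mem_cyl {m n : ℕ} {x z t : G} (hx : x ∈ cyl n z) (ht : t ∈ I₀ m) (hnm : n ≤ m) :
    x + t ∈ cyl n z := fun j hj => by
  simp [hx j hj, show t j = 0 from ht j (by omega)]

instance : μG.IsAddLeftInvariant := by unfold μG; infer_instance

instance : IsProbabilityMeasure μG := ⟨Measure.addHaarMeasure_self⟩

lemma measurableSet_cyl (n : ℕ) (x : G) : MeasurableSet (cyl n x) := by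
  have h : cyl n x = ⋂ k ∈ Set.Iio n, (fun y : G => y k) ⁻¹' {x k} := by ext; simp [cyl]
  rw [h]
  exact .biInter (Set.to_countable _) fun k _ =>
    ((isOpen_discrete {x k}).preimage (continuous_apply k)).measurableSet

lemma cyl_eq_preimage_add (n : ℕ) (x : G) : cyl n x = (x + ·) ⁻¹' I₀ n := by
  have h (a b : ZMod 2) : a + b = 0 ↔ b = a := by revert a b; decide
  ext y
  simp [cyl, I₀, h]

lemma measureReal_cyl (n : ℕ) (x : G) : μG.real (cyl n x) = μG.real (I₀ n) := by
  rw [cyl_eq_preimage_add, measureReal_def, measure_preimage_add, measureReal_def]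

lemma mem_cyl_succ_e {M : ℕ} {y : G} : y ∈ cyl (M + 1) (e M) ↔ y ∈ I₀ M ∧ y M = 1 := by
  have he (j : ℕ) (hj : j < M) : e M j = 0 := by simp [e, hj.ne]
  refine ⟨fun h => ⟨fun j hj => (h j (by omega)).trans (he j hj), (h M (by omega)).trans ?_⟩,
    fun ⟨h, hM⟩ j hj => ?_⟩
  · simp [e]
  · rcases Nat.lt_succ_iff_lt_or_eq.1 hj with hj | rfl
    · exact (h j hj).trans (he j hj).symm
    · simp [hM, e]

lemma measureReal_I₀ (M : ℕ) : μG.real (I₀ M) = (2 ^ M)⁻¹ := by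
  induction M with
  | zero => simp [I₀, cyl]
  | succ M ih =>
    have hsplit : I₀ M = I₀ (M + 1) ∪ cyl (M + 1) (e M) := by
      ext y
      rcases ZMod.two_cases (y M) with h | h <;> simp [mem_I₀_succ, mem_cyl_succ_e, h]
    have hdisj : Disjoint (I₀ (M + 1)) (cyl (M + 1) (e M)) :=
      Set.disjoint_left.2 fun y h₀ h₁ =>
        zero_ne_one ((mem_I₀_succ.1 h₀).2.symm.trans (mem_cyl_succ_e.1 h₁).2)
    rw [hsplit, measureReal_union hdisj (measurableSet_cyl _ _), measureReal_cyl] at ih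
    rw [pow_succ, mul_inv, ← ih]
    ring

/-- `∫_{I_M} |K_n(x+t)| dμ(t) ≤ c 2^{k+l-2M}` for `n ≥ 2^M` and
`x ∈ I_{l+1}(e_k + e_l)`, `0 ≤ k < l < M`. -/
theorem fejer_integral_estimate :
    ∃ c : ℝ, 0 < c ∧ ∀ (M n k l : ℕ) (x : G),
      2 ^ M ≤ n → k < l → l < M → x ∈ cyl (l + 1) (e k + e l) →
      (∫ t in I₀ M, |K n (x + t)| ∂μG) ≤ c * (2 : ℝ) ^ ((k : ℤ) + l - 2 * M) := by
  refine ⟨4, by norm_num, fun M n k l x hn hkl hlM hx => ?_⟩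
  have hpt : ∀ t ∈ I₀ M, ‖|K n (x + t)|‖ ≤ 2 ^ (k + l + 2) / 2 ^ M := fun t ht => by
    obtain ⟨hk, hl⟩ := apply_eq_one_of_mem_cyl_e_add_e hkl (add_mem_cyl hx ht hlM)
    rw [Real.norm_eq_abs, abs_abs]
    exact abs_K_le hkl hk hl hn
  calc (∫ t in I₀ M, |K n (x + t)| ∂μG)
      ≤ ‖∫ t in I₀ M, |K n (x + t)| ∂μG‖ := Real.le_norm_self _
    _ ≤ 2 ^ (k + l + 2) / 2 ^ M * μG.real (I₀ M) :=
        norm_setIntegral_le_of_norm_le_const (measure_lt_top _ _) hpt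
    _ = 4 * (2 : ℝ) ^ ((k : ℤ) + l - 2 * M) := by
        rw [measureReal_I₀,
          show (k : ℤ) + l - 2 * M = ((k + l : ℕ) : ℤ) - ((M + M : ℕ) : ℤ) by push_cast; ring,
          zpow_sub₀ two_ne_zero, zpow_natCast, zpow_natCast]
        field_simp
        ring
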